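/- Let (ℱ, 𝒮) be a digraph-source sequence of size ℓ, B ⊆ ⋃_i V(G_i), and let G^D be the auxiliary digraph obtained by taking disjoint copies V_1,...,V_ℓ of G_1,...,G_ℓ, adding all vertices of B, and adding an edge from each copy of a vertex v to the vertex v ∈ B whenever v ∈ B. Let S′ be the union of the copies of the S_i in the respective V_i. Then: (i) for every set of D-paths 𝒫 with respect to (ℱ, 𝒮) and B there is a set 𝒫′ of pairwise vertex-disjoint S′ → B paths in G^D with |𝒫′| ≥ |𝒫|; and (ii) for every set 𝒫′ of pairwise vertex-disjoint S′ → B paths in G^D there is a set of D-paths 𝒫 with |𝒫| ≥ |𝒫′|. -/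

import Mathlib

/-- A (directed) path given as a nonempty list of pairwise-distinct vertices
with consecutive pairs being edges of the digraph `G`. -/
def IsPathList {V : Type*} (G : V → V → Prop) (p : List V) : Prop :=
  p ≠ [] ∧ p.Nodup ∧ p.Chain' G

/-- The first vertex of the list `p` belongs to `A`. -/
def FirstIn {V : Type*} (p : List V) (A : Set V) : Prop := ∃ a ∈ A, p.head? = some a

/-- The last vertex of the list `p` belongs to `A`. -/
def LastIn {V : Type*} (p : List V) (A : Set V) : Prop := ∃ a ∈ A, p.getLast? = some a

/-- `X` is an `(A,B)`-separator in `G`: every path of `G` starting in `A` and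
ending in `B` meets `X`. -/
def IsSeparator {V : Type*} (G : V → V → Prop) (A B X : Set V) : Prop :=
  ∀ p : List V, IsPathList G p → FirstIn p A → LastIn p B → ∃ v ∈ p, v ∈ X

/-- Two lists of vertices share no vertex. -/
def ListsDisjoint {V : Type*} (p q : List V) : Prop := ∀ v, v ∈ p → v ∉ q

/-- An `(ℱ,𝒮)`-respecting system of paths, encoded as a finite set of pairs
`(i, p)` where `p` is a path of `G i` starting in `S i`, and paths assigned to
the same index (i.e. in the same part of the defining partition) are pairwise
vertex-disjoint. -/
def RespectingSys {V : Type*} {ℓ : ℕ} (G : Fin ℓ → V → V → Prop) (S : Fin ℓ → Set V)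
    (P : Finset (Fin ℓ × List V)) : Prop :=
  (∀ q ∈ P, IsPathList (G q.1) q.2 ∧ FirstIn q.2 (S q.1)) ∧
  (∀ q ∈ P, ∀ q' ∈ P, q ≠ q' → q.1 = q'.1 → ListsDisjoint q.2 q'.2)

/-- A set of D-paths w.r.t. `(ℱ,𝒮)` and `B` : a respecting system whose paths
have pairwise distinct last vertices, all lying in `B`. -/
def DPathSys {V : Type*} {ℓ : ℕ} (G : Fin ℓ → V → V → Prop) (S : Fin ℓ → Set V)
    (B : Set V) (P : Finset (Fin ℓ × List V)) : Prop :=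
  RespectingSys G S P ∧ (∀ q ∈ P, LastIn q.2 B) ∧
  (∀ q ∈ P, ∀ q' ∈ P, q ≠ q' → q.2.getLast? ≠ q'.2.getLast?)

/-- The auxiliary digraph `G^D`: disjoint copies of the `G i` (on `Fin ℓ × V`),
together with the vertices of `B` (the `Sum.inr` part), with an edge from each
copy of `v` to the vertex `v ∈ B`. -/
def AuxD {V : Type*} {ℓ : ℕ} (G : Fin ℓ → V → V → Prop) (B : Set V) :
    (Fin ℓ × V) ⊕ V → (Fin ℓ × V) ⊕ V → Prop :=
  fun x y => match x, y with
  | Sum.inl (i, u), Sum.inl (j, v) => i = j ∧ G i u v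
  | Sum.inl (_, u), Sum.inr v => u = v ∧ v ∈ B
  | _, _ => False

/-- The copies of the source sets inside the respective copies of the `G i`. -/
def AuxS {V : Type*} {ℓ : ℕ} (S : Fin ℓ → Set V) : Set ((Fin ℓ × V) ⊕ V) :=
  {w | ∃ i, ∃ s ∈ S i, w = Sum.inl (i, s)}

/-!
A path `p` of `G i` ending at `b ∈ B` corresponds to the path of `G^D` that runs through the copy
of `p` in `V_i` and then along the edge to `b`. This correspondence is injective on nonempty paths
and hits every `S' → B` path of `G^D`, since the vertices of `B` are sinks and every other edge
stays inside one copy. Two such paths of `G^D` are disjoint exactly when the original paths have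
distinct last vertices and, if they live in the same `G_i`, are disjoint. So images and preimages
under the correspondence translate the two kinds of path systems into each other and preserve
their size.
-/

open Sum

section AuxPath

variable {V : Type*} {ℓ : ℕ}

lemma isPathList_iff {α : Type*} {R : α → α → Prop} {p : List α} :
    IsPathList R p ↔ p ≠ [] ∧ p.Nodup ∧ p.IsChain R :=
  Iff.rfl

/-- The copy of `r.2` in `V_{r.1}`, extended by the edge of `G^D` from its last vertex to that
vertex's `Sum.inr` copy in `B`. -/
def toAuxPath (r : Fin ℓ × List V) : List ((Fin ℓ × V) ⊕ V) :=
  r.2.map (fun v => inl (r.1, v)) ++ (r.2.getLast?.map inr).toList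

lemma toAuxPath_eq_of_getLast? {r : Fin ℓ × List V} {b : V} (h : r.2.getLast? = some b) :
    toAuxPath r = r.2.map (fun v => inl (r.1, v)) ++ [inr b] := by
  simp [toAuxPath, h]

lemma toAuxPath_eq_nil {r : Fin ℓ × List V} : toAuxPath r = [] ↔ r.2 = [] := by
  simp [toAuxPath]

lemma toAuxPath_cons {i : Fin ℓ} {s : V} {q : List V} (hq : q ≠ []) :
    toAuxPath (i, s :: q) = inl (i, s) :: toAuxPath (i, q) := by
  have hb := List.getLast?_eq_some_getLast hq
  rw [toAuxPath_eq_of_getLast? (b := q.getLast hq) (by simp [List.getLast?_cons, hb]),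
    toAuxPath_eq_of_getLast? hb]
  rfl

lemma mem_toAuxPath {r : Fin ℓ × List V} {x : (Fin ℓ × V) ⊕ V} :
    x ∈ toAuxPath r ↔ (∃ v ∈ r.2, inl (r.1, v) = x) ∨ ∃ b ∈ r.2.getLast?, inr b = x := by
  simp [toAuxPath]

lemma head?_toAuxPath (r : Fin ℓ × List V) :
    (toAuxPath r).head? = r.2.head?.map (fun v => inl (r.1, v)) := by
  obtain ⟨i, _ | ⟨_, _⟩⟩ := r <;> simp [toAuxPath]

lemma getLast?_toAuxPath (r : Fin ℓ × List V) :
    (toAuxPath r).getLast? = r.2.getLast?.map inr := by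
  cases h : r.2.getLast? <;> simp_all [toAuxPath]

lemma isPathList_toAuxPath_iff {G : Fin ℓ → V → V → Prop} {B : Set V} {r : Fin ℓ × List V} :
    IsPathList (AuxD G B) (toAuxPath r) ↔ IsPathList (G r.1) r.2 ∧ LastIn r.2 B := by
  obtain ⟨i, p⟩ := r
  rcases h : p.getLast? with _ | b
  · simp_all [isPathList_iff, LastIn, toAuxPath]
  have hinj : Function.Injective (fun v => (inl (i, v) : (Fin ℓ × V) ⊕ V)) := fun _ _ h => by
    simpa using h
  rw [toAuxPath_eq_of_getLast? h]
  simp [isPathList_iff, LastIn, h, and_assoc, List.nodup_append, List.nodup_map_iff hinj,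
    List.isChain_append, List.isChain_map, AuxD, List.getLast?_map,
    List.getLast?_eq_none_iff.not.mp]

lemma firstIn_toAuxPath_iff {S : Fin ℓ → Set V} {r : Fin ℓ × List V} :
    FirstIn (toAuxPath r) (AuxS S) ↔ FirstIn r.2 (S r.1) := by
  simp [FirstIn, AuxS, head?_toAuxPath, eq_comm]

lemma lastIn_toAuxPath_iff {B : Set V} {r : Fin ℓ × List V} :
    LastIn (toAuxPath r) (inr '' B) ↔ LastIn r.2 B := by
  simp [LastIn, getLast?_toAuxPath]

lemma isAuxPath_toAuxPath_iff {G : Fin ℓ → V → V → Prop} {S : Fin ℓ → Set V} {B : Set V}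
    {r : Fin ℓ × List V} :
    (IsPathList (AuxD G B) (toAuxPath r) ∧ FirstIn (toAuxPath r) (AuxS S) ∧
      LastIn (toAuxPath r) (inr '' B)) ↔
    (IsPathList (G r.1) r.2 ∧ FirstIn r.2 (S r.1)) ∧ LastIn r.2 B := by
  rw [isPathList_toAuxPath_iff, firstIn_toAuxPath_iff, lastIn_toAuxPath_iff]
  tauto

lemma toAuxPath_injOn : Set.InjOn (toAuxPath (V := V) (ℓ := ℓ)) {r | r.2 ≠ []} := by
  rintro ⟨i, p⟩ hp ⟨j, q⟩ hq h
  have hb := List.getLast?_eq_some_getLast hp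
  have hc := List.getLast?_eq_some_getLast hq
  have hbc : p.getLast hp = q.getLast hq := by
    simpa [getLast?_toAuxPath, hb, hc] using congrArg List.getLast? h
  rw [toAuxPath_eq_of_getLast? hb, toAuxPath_eq_of_getLast? hc, hbc,
    List.append_cancel_right_eq] at h
  obtain rfl : i = j := by
    obtain ⟨v, p, rfl⟩ := List.exists_cons_of_ne_nil hp
    obtain ⟨w, q, rfl⟩ := List.exists_cons_of_ne_nil hq
    simp_all
  simp_all [List.map_inj_right]

lemma listsDisjoint_toAuxPath_iff {r r' : Fin ℓ × List V} (hr : r.2 ≠ []) :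
    ListsDisjoint (toAuxPath r) (toAuxPath r') ↔
      (r.1 = r'.1 → ListsDisjoint r.2 r'.2) ∧ r.2.getLast? ≠ r'.2.getLast? := by
  have hb := List.getLast?_eq_some_getLast hr
  simp only [ListsDisjoint, mem_toAuxPath, hb]
  aesop

lemma exists_toAuxPath_eq {G : Fin ℓ → V → V → Prop} {B : Set V}
    {p : List ((Fin ℓ × V) ⊕ V)} (hp : p.IsChain (AuxD G B)) {i : Fin ℓ} {s b : V}
    (hhead : p.head? = some (inl (i, s))) (hlast : p.getLast? = some (inr b)) :
    ∃ q : List V, toAuxPath (i, q) = p := by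
  induction p generalizing s with
  | nil => simp at hhead
  | cons x t ih =>
    obtain rfl : x = inl (i, s) := by simpa using hhead
    rcases t with _ | ⟨y, t⟩
    · simp at hlast
    rw [List.isChain_cons_cons] at hp
    rcases y with ⟨j, v⟩ | c
    · obtain ⟨rfl, -⟩ := hp.1
      obtain ⟨q, hqt⟩ := ih hp.2 rfl (by simpa using hlast)
      have hq : q ≠ [] := toAuxPath_eq_nil.not.mp (hqt ▸ List.cons_ne_nil _ _)
      exact ⟨s :: q, by rw [toAuxPath_cons hq, hqt]⟩
    · obtain ⟨rfl, -⟩ := hp.1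
      rcases t with _ | ⟨z, t⟩
      · exact ⟨[s], rfl⟩
      · exact (List.isChain_cons_cons.mp hp.2).1.elim

lemma DPathSys.exists_disjoint_auxPaths {G : Fin ℓ → V → V → Prop} {S : Fin ℓ → Set V}
    {B : Set V} {P : Finset (Fin ℓ × List V)} (hP : DPathSys G S B P) :
    ∃ Q : Finset (List ((Fin ℓ × V) ⊕ V)),
      (∀ p ∈ Q, IsPathList (AuxD G B) p ∧ FirstIn p (AuxS S) ∧ LastIn p (inr '' B)) ∧
      (∀ p ∈ Q, ∀ q ∈ Q, p ≠ q → ListsDisjoint p q) ∧ P.card ≤ Q.card := by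
  classical
  obtain ⟨⟨hpath, hdisj⟩, hlast, hlast_ne⟩ := hP
  have hne : ∀ r ∈ P, r.2 ≠ [] := fun r hr => (hpath r hr).1.1
  refine ⟨P.image toAuxPath, ?_, ?_,
    (Finset.card_image_of_injOn (toAuxPath_injOn.mono hne)).ge⟩
  · simp only [Finset.forall_mem_image]
    exact fun r hr => isAuxPath_toAuxPath_iff.2 ⟨hpath r hr, hlast r hr⟩
  · simp only [Finset.forall_mem_image]
    intro r hr r' hr' hrr'
    have hrr' : r ≠ r' := ne_of_apply_ne _ hrr'
    exact (listsDisjoint_toAuxPath_iff (hne r hr)).2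
      ⟨hdisj r hr r' hr' hrr', hlast_ne r hr r' hr' hrr'⟩

lemma exists_dPathSys_of_disjoint_auxPaths {G : Fin ℓ → V → V → Prop} {S : Fin ℓ → Set V}
    {B : Set V} {Q : Finset (List ((Fin ℓ × V) ⊕ V))}
    (hQ : ∀ p ∈ Q, IsPathList (AuxD G B) p ∧ FirstIn p (AuxS S) ∧ LastIn p (inr '' B))
    (hdisj : ∀ p ∈ Q, ∀ q ∈ Q, p ≠ q → ListsDisjoint p q) :
    ∃ P : Finset (Fin ℓ × List V), DPathSys G S B P ∧ Q.card ≤ P.card := by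
  have hne : toAuxPath ⁻¹' ↑Q ⊆ {r : Fin ℓ × List V | r.2 ≠ []} :=
    fun r hr => toAuxPath_eq_nil.not.mp (hQ _ hr).1.1
  have hinj := toAuxPath_injOn.mono hne
  set P := Q.preimage toAuxPath hinj
  have hsurj : Set.SurjOn (toAuxPath (ℓ := ℓ) (V := V)) P Q := by
    intro p hp
    obtain ⟨⟨-, -, hchain⟩, ⟨-, ⟨i, s, -, rfl⟩, hhead⟩, ⟨-, ⟨b, -, rfl⟩, hlast⟩⟩ := hQ p hp
    obtain ⟨q, rfl⟩ := exists_toAuxPath_eq hchain hhead hlast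
    exact ⟨(i, q), by simpa [P] using hp, rfl⟩
  have hpathP : ∀ r ∈ P, (IsPathList (G r.1) r.2 ∧ FirstIn r.2 (S r.1)) ∧ LastIn r.2 B :=
    fun r hr => isAuxPath_toAuxPath_iff.1 (hQ _ (Finset.mem_preimage.1 hr))
  have hdisjP : ∀ r ∈ P, ∀ r' ∈ P, r ≠ r' →
      (r.1 = r'.1 → ListsDisjoint r.2 r'.2) ∧ r.2.getLast? ≠ r'.2.getLast? := by
    intro r hr r' hr' hrr'
    rw [Finset.mem_preimage] at hr hr'
    exact (listsDisjoint_toAuxPath_iff (hne hr)).1 (hdisj _ hr _ hr' (hinj.ne hr hr' hrr'))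
  exact ⟨P,
    ⟨⟨fun r hr => (hpathP r hr).1, fun r hr r' hr' hrr' => (hdisjP r hr r' hr' hrr').1⟩,
      fun r hr => (hpathP r hr).2, fun r hr r' hr' hrr' => (hdisjP r hr r' hr' hrr').2⟩,
    Finset.card_le_card_of_surjOn toAuxPath hsurj⟩

end AuxPath

theorem dpaths_aux_correspondence {V : Type*} {ℓ : ℕ}
    (G : Fin ℓ → V → V → Prop) (S : Fin ℓ → Set V) (B : Set V) :
    (∀ P : Finset (Fin ℓ × List V), DPathSys G S B P →
      ∃ Q : Finset (List ((Fin ℓ × V) ⊕ V)),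
        (∀ p ∈ Q, IsPathList (AuxD G B) p ∧ FirstIn p (AuxS S) ∧
          LastIn p (Sum.inr '' B)) ∧
        (∀ p ∈ Q, ∀ q ∈ Q, p ≠ q → ListsDisjoint p q) ∧
        P.card ≤ Q.card) ∧
    (∀ Q : Finset (List ((Fin ℓ × V) ⊕ V)),
      (∀ p ∈ Q, IsPathList (AuxD G B) p ∧ FirstIn p (AuxS S) ∧
        LastIn p (Sum.inr '' B)) →
      (∀ p ∈ Q, ∀ q ∈ Q, p ≠ q → ListsDisjoint p q) →
      ∃ P : Finset (Fin ℓ × List V), DPathSys G S B P ∧ Q.card ≤ P.card) :=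
  ⟨fun _ => DPathSys.exists_disjoint_auxPaths, fun _ => exists_dPathSys_of_disjoint_auxPaths⟩
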